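/- For every q ∈ ℂ and every real c > 0, the infimum over δ ∈ ℂ and ω ∈ (0, ∞) of ω·(|1 − δ·q|² + c·|δ|²) − log ω − 1 equals −log(1 + |q|²/c), and this infimum is attained at δ* = conj(q)/(|q|² + c) and ω* = 1 + |q|²/c. -/

import Mathlib

/-!
Completing the square in `δ` gives `e(δ) = c / (|q|² + c) + (|q|² + c) |δ - δ*|²`, so the MMSE
is minimised exactly at `δ*` with value `c / (|q|² + c) = 1 / ω*`. For fixed `e > 0`, the map
`ω ↦ ω e - log ω - 1` is bounded below by `log e` (this is `log x ≤ x - 1` at `x = ω e`),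
with equality at `ω = 1 / e`. Chaining the two bounds gives the infimum `log (c / (|q|² + c))`.
-/

open Real

noncomputable section

def mmse (q : ℂ) (c : ℝ) (δ : ℂ) : ℝ :=
  ‖1 - δ * q‖ ^ 2 + c * ‖δ‖ ^ 2

def mmseReceiver (q : ℂ) (c : ℝ) : ℂ :=
  starRingEnd ℂ q / ((‖q‖ ^ 2 + c : ℝ) : ℂ)

end

theorem mmse_eq_add_sq_mmseReceiver (q : ℂ) {c : ℝ} (hs : ‖q‖ ^ 2 + c ≠ 0) (δ : ℂ) :
    mmse q c δ = c / (‖q‖ ^ 2 + c) + (‖q‖ ^ 2 + c) * ‖δ - mmseReceiver q c‖ ^ 2 := by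
  have hs' : q.re ^ 2 + q.im ^ 2 + c ≠ 0 := by
    simpa [← Complex.normSq_eq_norm_sq, Complex.normSq_apply, ← sq] using hs
  simp only [mmse, mmseReceiver, ← Complex.normSq_eq_norm_sq, Complex.normSq_apply,
    Complex.sub_re, Complex.sub_im, Complex.mul_re, Complex.mul_im, Complex.one_re,
    Complex.one_im, Complex.div_ofReal_re, Complex.div_ofReal_im, Complex.conj_re,
    Complex.conj_im]
  field_simp
  ring

theorem div_le_mmse (q : ℂ) {c : ℝ} (hs : 0 < ‖q‖ ^ 2 + c) (δ : ℂ) :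
    c / (‖q‖ ^ 2 + c) ≤ mmse q c δ := by
  rw [mmse_eq_add_sq_mmseReceiver q hs.ne']
  exact le_add_of_nonneg_right (by positivity)

theorem mmse_mmseReceiver (q : ℂ) {c : ℝ} (hs : ‖q‖ ^ 2 + c ≠ 0) :
    mmse q c (mmseReceiver q c) = c / (‖q‖ ^ 2 + c) := by
  simp [mmse_eq_add_sq_mmseReceiver q hs]

theorem Real.log_le_mul_sub_log_sub_one {e ω : ℝ} (he : 0 < e) (hω : 0 < ω) :
    log e ≤ ω * e - log ω - 1 := by
  have := log_le_sub_one_of_pos (mul_pos hω he)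
  rw [log_mul hω.ne' he.ne'] at this
  linarith

theorem Real.inv_mul_sub_log_inv_sub_one {e : ℝ} (he : e ≠ 0) :
    e⁻¹ * e - log e⁻¹ - 1 = log e := by
  rw [inv_mul_cancel₀ he, log_inv]
  ring

/-- For every `q ∈ ℂ` and real `c > 0`, the infimum over `δ ∈ ℂ` and `ω ∈ (0,∞)` of
`ω·(|1 − δq|² + c|δ|²) − log ω − 1` equals `−log(1 + |q|²/c)`, attained at
`δ* = conj(q)/(|q|² + c)` and `ω* = 1 + |q|²/c`. -/
theorem stmt_2 (q : ℂ) (c : ℝ) (hc : 0 < c)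
    (F : ℂ → ℝ → ℝ)
    (hF : ∀ (δ : ℂ) (ω : ℝ),
      F δ ω = ω * (‖1 - δ * q‖ ^ 2 + c * ‖δ‖ ^ 2) - Real.log ω - 1)
    (δstar : ℂ) (hδ : δstar = (starRingEnd ℂ) q / ((‖q‖ ^ 2 + c : ℝ) : ℂ))
    (ωstar : ℝ) (hω : ωstar = 1 + ‖q‖ ^ 2 / c) :
    (∀ (δ : ℂ) (ω : ℝ), 0 < ω → -Real.log (1 + ‖q‖ ^ 2 / c) ≤ F δ ω) ∧
      0 < ωstar ∧
      F δstar ωstar = -Real.log (1 + ‖q‖ ^ 2 / c) := by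
  have hs : 0 < ‖q‖ ^ 2 + c := by positivity
  have hωstar : ωstar = (c / (‖q‖ ^ 2 + c))⁻¹ := by
    rw [hω, inv_div, add_div, div_self hc.ne', add_comm]
  have hlog : -log (1 + ‖q‖ ^ 2 / c) = log (c / (‖q‖ ^ 2 + c)) := by
    rw [← hω, hωstar, log_inv, neg_neg]
  have hF' : ∀ δ ω, F δ ω = ω * mmse q c δ - log ω - 1 := hF
  refine ⟨fun δ ω hω => ?_, hωstar ▸ by positivity, ?_⟩
  · rw [hlog, hF']
    calc log (c / (‖q‖ ^ 2 + c)) ≤ log (mmse q c δ) :=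
          log_le_log (by positivity) (div_le_mmse q hs δ)
      _ ≤ ω * mmse q c δ - log ω - 1 :=
          log_le_mul_sub_log_sub_one ((div_pos hc hs).trans_le (div_le_mmse q hs δ)) hω
  · rw [hlog, hF', hδ, ← mmseReceiver, mmse_mmseReceiver q hs.ne', hωstar]
    exact inv_mul_sub_log_inv_sub_one (by positivity)
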